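/- arXiv:1506.00002 — 2 statements merged into one kernel-verified Lean document; each statement's English description precedes it below -/
import Mathlib

section
/- Given the momentum-scaling perturbation with δn = n u²_⊥/[1+(1-c_s²)u²] (where u²_⊥ = μ^{ij}u_i u_j is the polar part of u²) and the corresponding δu^i, the induced first-order change in the energy density ε = (ρ+p)(1+u²) - p is δε = -(ρ+p) μ^{ij}u_i u_j, which is ≤ 0 whenever ρ+p ≥ 0. -/
/- STATEMENT 5: For the momentum-scaling perturbation with
δn = n u²_⊥ / [1+(1-c_s²)u²] (u²_⊥ = μ^{ij}u_iu_j the polar part of u²),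
s fixed, n√(1+u²) fixed (so δ(u²) = -2(1+u²)δn/n), δρ = (∂ρ/∂n)δn,
δp = c_s²(∂ρ/∂n)δn, the induced change of ε = (ρ+p)(1+u²) - p is
δε = -(ρ+p) u²_⊥ ≤ 0 whenever ρ+p ≥ 0.  Here ρ+p = n ∂ρ/∂n is the
Gibbs-Duhem relation. -/
theorem stmt5 (ρ p n Dρn cs2 u2 up2 δn δu2 δρ δp δε : ℝ)
    (hn : 0 < n) (hρp : 0 ≤ ρ + p) (hGD : ρ + p = n * Dρn)
    (hcs : 0 ≤ cs2 ∧ cs2 ≤ 1) (hu2 : 0 ≤ u2) (hup2 : 0 ≤ up2) (hle : up2 ≤ u2)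
    (hδn : δn = n * up2 / (1 + (1 - cs2) * u2))
    (hδu2 : δu2 = -2 * (1 + u2) * δn / n)
    (hδρ : δρ = Dρn * δn) (hδp : δp = cs2 * Dρn * δn)
    (hδε : δε = (δρ + δp) * (1 + u2) + (ρ + p) * δu2 - δp) :
    δε = -((ρ + p) * up2) ∧ δε ≤ 0 := by
  have hD : 0 < 1 + (1 - cs2) * u2 := by nlinarith [hcs.2]
  have heq : δε = -((ρ + p) * up2) := by
    subst hδε hδρ hδp hδu2 hδn
    rw [hGD]
    field_simp
    ring
  refine ⟨heq, ?_⟩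
  rw [heq]
  nlinarith
end

section
/- The heating perturbation with δs = f, δ(n√(1+u²)) = 0, δP_i = 0 has unique solution δn = n u²(nT + ∂p/∂s) f / [(ρ+p)(1+(1-c_s²)u²)] and δu^i = -(1+u²)(nT + ∂p/∂s) f u^i / [(ρ+p)(1+(1-c_s²)u²)], and the induced change in ε = (ρ+p)(1+u²) - p is δε = nTf. -/
/-!
After multiplication by `√(1 + u²)` the two linearised constraints become polynomial:
`δn (1 + u²) + n ⟪u, δu⟫ = 0` and `(δw (1 + u²) + w ⟪u, δu⟫) u + w (1 + u²) δu = 0`,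
with `w = ρ + p`. The difference of two solutions solves these equations at fixed entropy,
where `δw = (1 + c_s²) (∂ρ/∂n) δn`; pairing the momentum equation with `u` and eliminating
`⟪u, δu⟫` leaves `w (1 + u²) (1 + (1 - c_s²) u²) δn = 0`, and `c_s² ≤ 1` makes the coefficient
nonzero, so `δn = 0`, then `⟪u, δu⟫ = 0` and `δu = 0`. That the stated pair solves the system,
and that it gives `δε = nTf`, is a direct computation using `ρ + p = n ∂ρ/∂n` and `nT = ∂ρ/∂s`.
-/

open scoped RealInnerProductSpace

section HeatingPerturbation

variable {E : Type*} [NormedAddCommGroup E] [InnerProductSpace ℝ E]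

/- First-order variations of `n √(1 + u²)`, of `P = w √(1 + u²) u` and of
`ε = w (1 + u²) - p`, where `w = ρ + p`, `δρ = ∂ρ/∂n δn + ∂ρ/∂s δs` and
`δp = c_s² ∂ρ/∂n δn + ∂p/∂s δs`. -/
noncomputable def numberFluxVariation (n δn : ℝ) (u δu : E) : ℝ :=
  δn * √(1 + ⟪u, u⟫) + n * ⟪u, δu⟫ / √(1 + ⟪u, u⟫)

noncomputable def momentumVariation (w δw : ℝ) (u δu : E) : E :=
  (δw * √(1 + ⟪u, u⟫)) • u + (w * (⟪u, δu⟫ / √(1 + ⟪u, u⟫))) • u + (w * √(1 + ⟪u, u⟫)) • δu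

def energyVariation (w δρ δp : ℝ) (u δu : E) : ℝ :=
  (δρ + δp) * (1 + ⟪u, u⟫) + w * (2 * ⟪u, δu⟫) - δp

def densityVariation (Dρn Dρs δn δs : ℝ) : ℝ := Dρn * δn + Dρs * δs

def pressureVariation (cs2 Dρn Dps δn δs : ℝ) : ℝ := cs2 * Dρn * δn + Dps * δs

lemma one_add_inner_self_pos (u : E) : 0 < 1 + ⟪u, u⟫ := by
  linarith [real_inner_self_nonneg (x := u)]

lemma sqrt_one_add_inner_self_pos (u : E) : 0 < √(1 + ⟪u, u⟫) :=
  Real.sqrt_pos.2 (one_add_inner_self_pos u)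

lemma sq_sqrt_one_add_inner_self (u : E) : √(1 + ⟪u, u⟫) ^ 2 = 1 + ⟪u, u⟫ :=
  Real.sq_sqrt (one_add_inner_self_pos u).le

lemma numberFluxVariation_eq_zero_iff (n δn : ℝ) (u δu : E) :
    numberFluxVariation n δn u δu = 0 ↔ δn * (1 + ⟪u, u⟫) + n * ⟪u, δu⟫ = 0 := by
  have hs := sqrt_one_add_inner_self_pos u
  have hmul : √(1 + ⟪u, u⟫) * numberFluxVariation n δn u δu = δn * (1 + ⟪u, u⟫) + n * ⟪u, δu⟫ := by
    rw [numberFluxVariation]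
    field_simp
    rw [sq_sqrt_one_add_inner_self]
  rw [← hmul, mul_eq_zero, or_iff_right hs.ne']

lemma momentumVariation_eq_zero_iff (w δw : ℝ) (u δu : E) :
    momentumVariation w δw u δu = 0 ↔
      (δw * (1 + ⟪u, u⟫) + w * ⟪u, δu⟫) • u + (w * (1 + ⟪u, u⟫)) • δu = 0 := by
  have hs := sqrt_one_add_inner_self_pos u
  have hmul : √(1 + ⟪u, u⟫) • momentumVariation w δw u δu =
      (δw * (1 + ⟪u, u⟫) + w * ⟪u, δu⟫) • u + (w * (1 + ⟪u, u⟫)) • δu := by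
    rw [momentumVariation, smul_add, smul_add, smul_smul, smul_smul, smul_smul, ← add_smul]
    congr 2 <;> field_simp <;> rw [sq_sqrt_one_add_inner_self]
  rw [← hmul, smul_eq_zero, or_iff_right hs.ne']

variable {a n Dρn cs2 : ℝ}

lemma eq_zero_of_isentropic_variation_eq_zero (hn : n ≠ 0) (ha : a ≠ 0) (hGD : a = n * Dρn)
    {x : ℝ} {u v : E} (hE : 1 + (1 - cs2) * ⟪u, u⟫ ≠ 0)
    (hflux : x * (1 + ⟪u, u⟫) + n * ⟪u, v⟫ = 0)
    (hmom : ((1 + cs2) * Dρn * x * (1 + ⟪u, u⟫) + a * ⟪u, v⟫) • u + (a * (1 + ⟪u, u⟫)) • v = 0) :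
    x = 0 ∧ v = 0 := by
  have hmom_u := congrArg (⟪u, ·⟫) hmom
  simp only [inner_add_right, real_inner_smul_right, inner_zero_right] at hmom_u
  have hdet : a * (1 + ⟪u, u⟫) * (1 + (1 - cs2) * ⟪u, u⟫) * x = 0 := by
    linear_combination (-n) * hmom_u + a * (1 + 2 * ⟪u, u⟫) * hflux
      - (1 + cs2) * x * (1 + ⟪u, u⟫) * ⟪u, u⟫ * hGD
  have h1 := (one_add_inner_self_pos u).ne'
  have hx : x = 0 := (mul_eq_zero.1 hdet).resolve_left (mul_ne_zero (mul_ne_zero ha h1) hE)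
  have hv_u : ⟪u, v⟫ = 0 := by
    simpa [hx, hn] using hflux
  simp only [hx, hv_u, mul_zero, zero_mul, add_zero, zero_smul, zero_add, smul_eq_zero] at hmom
  exact ⟨hx, hmom.resolve_left (mul_ne_zero ha h1)⟩

lemma heating_variation_unique (hn : n ≠ 0) (ha : a ≠ 0) (hGD : a = n * Dρn)
    {Dρs Dps f δn₁ δn₂ : ℝ} {u δu₁ δu₂ : E} (hE : 1 + (1 - cs2) * ⟪u, u⟫ ≠ 0)
    (hflux₁ : numberFluxVariation n δn₁ u δu₁ = 0)
    (hmom₁ : momentumVariation a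
      (densityVariation Dρn Dρs δn₁ f + pressureVariation cs2 Dρn Dps δn₁ f) u δu₁ = 0)
    (hflux₂ : numberFluxVariation n δn₂ u δu₂ = 0)
    (hmom₂ : momentumVariation a
      (densityVariation Dρn Dρs δn₂ f + pressureVariation cs2 Dρn Dps δn₂ f) u δu₂ = 0) :
    δn₁ = δn₂ ∧ δu₁ = δu₂ := by
  rw [numberFluxVariation_eq_zero_iff] at hflux₁ hflux₂
  rw [momentumVariation_eq_zero_iff] at hmom₁ hmom₂
  unfold densityVariation pressureVariation at hmom₁ hmom₂
  have hdiff := eq_zero_of_isentropic_variation_eq_zero hn ha hGD hE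
    (x := δn₁ - δn₂) (v := δu₁ - δu₂)
    (by rw [inner_sub_right]; linear_combination hflux₁ - hflux₂)
    (by rw [inner_sub_right]; linear_combination (norm := module) hmom₁ - hmom₂)
  exact ⟨sub_eq_zero.1 hdiff.1, sub_eq_zero.1 hdiff.2⟩

lemma heating_variation_solution (hn : n ≠ 0) (ha : a ≠ 0) (hGD : a = n * Dρn)
    {T Dps f δn : ℝ} {u δu : E} (hE : 1 + (1 - cs2) * ⟪u, u⟫ ≠ 0)
    (hδn : δn = n * ⟪u, u⟫ * (n * T + Dps) * f / (a * (1 + (1 - cs2) * ⟪u, u⟫)))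
    (hδu : δu = (-((1 + ⟪u, u⟫) * (n * T + Dps) * f / (a * (1 + (1 - cs2) * ⟪u, u⟫)))) • u) :
    numberFluxVariation n δn u δu = 0
    ∧ momentumVariation a
        (densityVariation Dρn (n * T) δn f + pressureVariation cs2 Dρn Dps δn f) u δu = 0
    ∧ energyVariation a (densityVariation Dρn (n * T) δn f) (pressureVariation cs2 Dρn Dps δn f)
        u δu = n * T * f := by
  set c := -((1 + ⟪u, u⟫) * (n * T + Dps) * f / (a * (1 + (1 - cs2) * ⟪u, u⟫))) with hc
  have hinner : ⟪u, δu⟫ = c * ⟪u, u⟫ := by rw [hδu, real_inner_smul_right]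
  subst hGD
  have hDρn : Dρn ≠ 0 := right_ne_zero_of_mul ha
  -- an opaque denominator keeps `field_simp` from reshaping it beyond what `ring` can match
  set D := 1 + (1 - cs2) * ⟪u, u⟫ with hD
  unfold densityVariation pressureVariation
  have hflux : δn * (1 + ⟪u, u⟫) + n * (c * ⟪u, u⟫) = 0 := by
    rw [hδn, hc]; field_simp; ring
  have hmom : (Dρn * δn + n * T * f + (cs2 * Dρn * δn + Dps * f)) * (1 + ⟪u, u⟫)
      + n * Dρn * (c * ⟪u, u⟫) + n * Dρn * (1 + ⟪u, u⟫) * c = 0 := by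
    rw [hδn, hc]; field_simp; rw [hD]; ring
  refine ⟨?_, ?_, ?_⟩
  · rw [numberFluxVariation_eq_zero_iff, hinner, hflux]
  · rw [momentumVariation_eq_zero_iff, hinner, hδu]
    linear_combination (norm := module) hmom • u
  · rw [energyVariation, hinner, hδn, hc]; field_simp; rw [hD]; ring

end HeatingPerturbation

theorem stmt16_general {E : Type*} [NormedAddCommGroup E] [InnerProductSpace ℝ E]
    (ρ p n Dρn Dρs Dps T cs2 f : ℝ) (u : E) (u2 : ℝ)
    (hu2 : u2 = inner ℝ u u) (hn : 0 < n) (hρp : 0 < ρ + p)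
    (hGD : ρ + p = n * Dρn) (hT : n * T = Dρs)
    (hcs : 0 ≤ cs2 ∧ cs2 ≤ 1)
    (δn : ℝ) (δu : E)
    (hδn : δn = n * u2 * (n * T + Dps) * f / ((ρ + p) * (1 + (1 - cs2) * u2)))
    (hδu : δu = (-((1 + u2) * (n * T + Dps) * f / ((ρ + p) * (1 + (1 - cs2) * u2)))) • u) :
    -- (δn, δu) satisfies the linearized conditions δ(n√(1+u²)) = 0, δP = 0 :
    (δn * Real.sqrt (1 + u2) + n * (inner ℝ u δu : ℝ) / Real.sqrt (1 + u2) = 0)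
    ∧ (((Dρn * δn + Dρs * f) + (cs2 * Dρn * δn + Dps * f)) * Real.sqrt (1 + u2)) • u
        + ((ρ + p) * ((inner ℝ u δu : ℝ) / Real.sqrt (1 + u2))) • u
        + ((ρ + p) * Real.sqrt (1 + u2)) • δu = 0
    -- uniqueness:
    ∧ (∀ δn' : ℝ, ∀ δu' : E,
        (δn' * Real.sqrt (1 + u2) + n * (inner ℝ u δu' : ℝ) / Real.sqrt (1 + u2) = 0)
        → (((Dρn * δn' + Dρs * f) + (cs2 * Dρn * δn' + Dps * f)) * Real.sqrt (1 + u2)) • u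
            + ((ρ + p) * ((inner ℝ u δu' : ℝ) / Real.sqrt (1 + u2))) • u
            + ((ρ + p) * Real.sqrt (1 + u2)) • δu' = 0
        → δn' = δn ∧ δu' = δu)
    -- induced change in ε = (ρ+p)(1+u²) - p is nTf:
    ∧ ((Dρn * δn + Dρs * f) + (cs2 * Dρn * δn + Dps * f)) * (1 + u2)
        + (ρ + p) * (2 * (inner ℝ u δu : ℝ)) - (cs2 * Dρn * δn + Dps * f)
        = n * T * f := by
  subst hu2 hT
  have hE : 0 < 1 + (1 - cs2) * ⟪u, u⟫ :=
    by nlinarith [real_inner_self_nonneg (x := u), hcs.2]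
  obtain ⟨hflux, hmom, henergy⟩ := heating_variation_solution hn.ne' hρp.ne' hGD hE.ne' hδn hδu
  exact ⟨hflux, hmom, fun _ _ hflux' hmom' =>
    heating_variation_unique hn.ne' hρp.ne' hGD hE.ne' hflux' hmom' hflux hmom, henergy⟩

theorem stmt16 {E : Type*} [NormedAddCommGroup E] [InnerProductSpace ℝ E]
    (ρ p n Dρn Dρs Dps T cs2 f : ℝ) (u : E) (u2 : ℝ)
    (hu2 : u2 = inner ℝ u u) (hn : 0 < n) (hρp : 0 < ρ + p)
    (hGD : ρ + p = n * Dρn) (hT : n * T = Dρs) (hTpos : 0 < T)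
    (hcs : 0 ≤ cs2 ∧ cs2 ≤ 1)
    (δn : ℝ) (δu : E)
    (hδn : δn = n * u2 * (n * T + Dps) * f / ((ρ + p) * (1 + (1 - cs2) * u2)))
    (hδu : δu = (-((1 + u2) * (n * T + Dps) * f / ((ρ + p) * (1 + (1 - cs2) * u2)))) • u) :
    -- (δn, δu) satisfies the linearized conditions δ(n√(1+u²)) = 0, δP = 0 :
    (δn * Real.sqrt (1 + u2) + n * (inner ℝ u δu : ℝ) / Real.sqrt (1 + u2) = 0)
    ∧ (((Dρn * δn + Dρs * f) + (cs2 * Dρn * δn + Dps * f)) * Real.sqrt (1 + u2)) • u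
        + ((ρ + p) * ((inner ℝ u δu : ℝ) / Real.sqrt (1 + u2))) • u
        + ((ρ + p) * Real.sqrt (1 + u2)) • δu = 0
    -- uniqueness:
    ∧ (∀ δn' : ℝ, ∀ δu' : E,
        (δn' * Real.sqrt (1 + u2) + n * (inner ℝ u δu' : ℝ) / Real.sqrt (1 + u2) = 0)
        → (((Dρn * δn' + Dρs * f) + (cs2 * Dρn * δn' + Dps * f)) * Real.sqrt (1 + u2)) • u
            + ((ρ + p) * ((inner ℝ u δu' : ℝ) / Real.sqrt (1 + u2))) • u
            + ((ρ + p) * Real.sqrt (1 + u2)) • δu' = 0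
        → δn' = δn ∧ δu' = δu)
    -- induced change in ε = (ρ+p)(1+u²) - p is nTf:
    ∧ ((Dρn * δn + Dρs * f) + (cs2 * Dρn * δn + Dps * f)) * (1 + u2)
        + (ρ + p) * (2 * (inner ℝ u δu : ℝ)) - (cs2 * Dρn * δn + Dps * f)
        = n * T * f :=
  stmt16_general ρ p n Dρn Dρs Dps T cs2 f u u2 hu2 hn hρp hGD hT hcs δn δu hδn hδu
end
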